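/- Let H be a complex Hilbert space and π : G → B(H) a map into bounded operators such that ‖π(g₁g₂)‖ ≤ ‖π(g₁)‖·‖π(g₂)‖ (π is multiplicative) and there exists R ≥ 1 with ‖π(g)‖ ≤ R whenever ‖g‖ ≤ e, where ‖·‖ is a norm on G satisfying: ‖exp tX‖ = ‖exp X‖^t for t ≥ 0 and X in a set S, ‖kg‖-invariance under a subgroup K with ‖π(k)‖ ≤ R for k ∈ K, and every g ∈ G factors as g = k exp X with k ∈ K, X ∈ S. Then ‖π(g)‖ ≤ R² ‖g‖^{log R} for all g ∈ G. -/
import Mathlib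

lemma pow_bound_aux {G : Type*} [Group G] {H : Type*} [NormedAddCommGroup H]
    [InnerProductSpace ℂ H] [CompleteSpace H]
    (π : G → H →L[ℂ] H)
    (hmul : ∀ g₁ g₂ : G, ‖π (g₁ * g₂)‖ ≤ ‖π g₁‖ * ‖π g₂‖)
    (y : G) : ∀ n : ℕ, 0 < n → ‖π (y ^ n)‖ ≤ ‖π y‖ ^ n := by
  intro n hn
  induction n with
  | zero => omega
  | succ m ih =>
    rcases Nat.eq_zero_or_pos m with hm | hm
    · simp [hm]
    · calc ‖π (y ^ (m + 1))‖ = ‖π (y ^ m * y)‖ := by rw [pow_succ]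
        _ ≤ ‖π (y ^ m)‖ * ‖π y‖ := hmul _ _
        _ ≤ ‖π y‖ ^ m * ‖π y‖ := by
            exact mul_le_mul_of_nonneg_right (ih hm) (norm_nonneg _)
        _ = ‖π y‖ ^ (m + 1) := (pow_succ _ _).symm

/-- Moderate growth estimate `‖π(g)‖ ≤ R² ‖g‖^{log R}` from boundedness of `π` on the
unit "ball" `{‖g‖ ≤ e}`, a Cartan-type decomposition `g = k·x`, and the one-parameter
scaling property of the norm on the "exponential" set `S`. -/
theorem stmt_9 {G : Type*} [Group G] {H : Type*} [NormedAddCommGroup H]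
    [InnerProductSpace ℂ H] [CompleteSpace H]
    (π : G → H →L[ℂ] H) (N : G → ℝ) (K : Subgroup G) (S : Set G) (R : ℝ)
    (hN1 : ∀ g, 1 ≤ N g)
    (hNK : ∀ k ∈ K, ∀ g : G, N (k * g) = N g)
    (hroot : ∀ x ∈ S, ∀ m : ℕ, 0 < m → ∃ y ∈ S, y ^ m = x ∧ N y = N x ^ ((m : ℝ)⁻¹))
    (hdec : ∀ g : G, ∃ k ∈ K, ∃ x ∈ S, g = k * x)
    (hmul : ∀ g₁ g₂ : G, ‖π (g₁ * g₂)‖ ≤ ‖π g₁‖ * ‖π g₂‖)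
    (hR : 1 ≤ R)
    (hRb : ∀ g : G, N g ≤ Real.exp 1 → ‖π g‖ ≤ R)
    (hRK : ∀ k ∈ K, ‖π k‖ ≤ R) :
    ∀ g : G, ‖π g‖ ≤ R ^ 2 * N g ^ Real.log R := by
  intro g
  obtain ⟨k, hk, x, hx, rfl⟩ := hdec g
  have hNx1 : 1 ≤ N x := hN1 x
  have hNxpos : 0 < N x := lt_of_lt_of_le one_pos hNx1
  set L : ℝ := Real.log (N x) with hL
  have hL0 : 0 ≤ L := Real.log_nonneg hNx1
  set m : ℕ := ⌊L⌋₊ + 1 with hm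
  have hmpos : 0 < m := Nat.succ_pos _
  have hLm : L ≤ (m : ℝ) := by
    have := Nat.lt_floor_add_one L
    push_cast [hm]
    linarith
  obtain ⟨y, hyS, hym, hNy⟩ := hroot x hx m hmpos
  have hmR : (0:ℝ) < m := by exact_mod_cast hmpos
  -- N y ≤ e
  have hNyle : N y ≤ Real.exp 1 := by
    rw [hNy]
    have : N x ^ ((m : ℝ)⁻¹) = Real.exp (L / m) := by
      rw [Real.rpow_def_of_pos hNxpos, ← hL, div_eq_mul_inv]
    rw [this]
    exact Real.exp_le_exp.mpr (by rw [div_le_one hmR]; exact hLm)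
  have hy : ‖π y‖ ≤ R := hRb y hNyle
  have hx_bound : ‖π x‖ ≤ R ^ m := by
    calc ‖π x‖ = ‖π (y ^ m)‖ := by rw [hym]
      _ ≤ ‖π y‖ ^ m := pow_bound_aux π hmul y m hmpos
      _ ≤ R ^ m := pow_le_pow_left₀ (norm_nonneg _) hy m
  have hRpos : (0:ℝ) < R := lt_of_lt_of_le one_pos hR
  -- R^m ≤ R * R^L = R * (N x)^(log R)
  have hRm : (R:ℝ) ^ m ≤ R * N x ^ Real.log R := by
    have h1 : (R:ℝ) ^ m = R ^ (m : ℝ) := (Real.rpow_natCast R m).symm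
    have h2 : R ^ (m : ℝ) ≤ R ^ (L + 1) := by
      apply Real.rpow_le_rpow_of_exponent_le hR
      have := Nat.floor_le hL0
      push_cast [hm]
      linarith
    have h3 : R ^ (L + 1) = R * R ^ L := by
      rw [Real.rpow_add hRpos, Real.rpow_one, mul_comm]
    have h4 : R ^ L = N x ^ Real.log R := by
      rw [Real.rpow_def_of_pos hRpos, Real.rpow_def_of_pos hNxpos, ← hL, mul_comm]
    calc (R:ℝ) ^ m = R ^ (m : ℝ) := h1
      _ ≤ R ^ (L + 1) := h2
      _ = R * R ^ L := h3
      _ = R * N x ^ Real.log R := by rw [h4]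
  have hNg : N (k * x) = N x := hNK k hk x
  calc ‖π (k * x)‖ ≤ ‖π k‖ * ‖π x‖ := hmul k x
    _ ≤ R * (R * N x ^ Real.log R) := by
        apply mul_le_mul (hRK k hk) (le_trans hx_bound hRm) (norm_nonneg _)
          (le_of_lt hRpos)
    _ = R ^ 2 * N x ^ Real.log R := by ring
    _ = R ^ 2 * N (k * x) ^ Real.log R := by rw [hNg]
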